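/- Let n₁, n₂ be positive integers, Â a symmetric positive definite real n₁×n₁ matrix, D a symmetric positive definite real n₂×n₂ matrix, and W a real n₂×n₁ matrix. Form A = [[Â, Wᵀ],[W, D]] and B_T = [[Â, 0],[W, D]], and assume A is positive definite. Then every complex eigenvalue of B_T⁻¹ A is a strictly positive real number. -/

import Mathlib

/-!
Let `x` be a complex eigenvector of `B_T⁻¹ A` for `μ`, so `A x = μ B_T x`. The two matrices share
their second block row, so `(B_T x)₂ = μ (B_T x)₂`, and unless `μ = 1` this block vanishes. Then
`x* B_T x = x₁* Â x₁ ≥ 0`, while `x* A x = μ x* B_T x` is positive, which forces `μ` to be a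
positive real number.
-/

open Matrix
open scoped ComplexOrder

namespace Matrix

theorem IsHermitian.map_ofReal {n : Type*} {M : Matrix n n ℝ} (hM : M.IsHermitian) :
    (M.map Complex.ofReal).IsHermitian := by
  rw [IsHermitian, ← conjTranspose_map _ fun _ ↦ by simp, hM.eq]

variable {m n : Type*} [Fintype m] [Fintype n]

theorem re_star_dotProduct_map_ofReal_mulVec (M : Matrix n n ℝ) (x : n → ℂ) :
    (star x ⬝ᵥ (M.map Complex.ofReal *ᵥ x)).re =
      (fun i ↦ (x i).re) ⬝ᵥ (M *ᵥ fun i ↦ (x i).re) +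
        (fun i ↦ (x i).im) ⬝ᵥ (M *ᵥ fun i ↦ (x i).im) := by
  simp [dotProduct, mulVec, Complex.re_sum, Complex.mul_re, Finset.mul_sum,
    ← Finset.sum_add_distrib]

theorem PosDef.map_ofReal {M : Matrix n n ℝ} (hM : M.PosDef) :
    (M.map Complex.ofReal).PosDef := by
  have hH := hM.isHermitian.map_ofReal
  refine .of_dotProduct_mulVec_pos hH fun x hx ↦ Complex.pos_iff.mpr ⟨?_, ?_⟩
  · have hre_im : (fun i ↦ (x i).re) ≠ 0 ∨ (fun i ↦ (x i).im) ≠ 0 := by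
      by_contra! h
      exact hx (funext fun i ↦ Complex.ext (congrFun h.1 i) (congrFun h.2 i))
    rw [re_star_dotProduct_map_ofReal_mulVec]
    rcases hre_im with h | h
    · exact add_pos_of_pos_of_nonneg (by simpa using hM.dotProduct_mulVec_pos h)
        (by simpa using hM.posSemidef.dotProduct_mulVec_nonneg _)
    · exact add_pos_of_nonneg_of_pos (by simpa using hM.posSemidef.dotProduct_mulVec_nonneg _)
        (by simpa using hM.dotProduct_mulVec_pos h)
  · exact (hH.im_star_dotProduct_mulVec_self x).symm

theorem exists_mulVec_eq_smul_of_mem_spectrum {K : Type*} [Field K] [DecidableEq n]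
    {M : Matrix n n K} {μ : K} (hμ : μ ∈ spectrum K M) : ∃ x ≠ 0, M *ᵥ x = μ • x := by
  rw [← spectrum_toLin'] at hμ
  obtain ⟨x, hx⟩ := (Module.End.hasEigenvalue_iff_mem_spectrum.mpr hμ).exists_hasEigenvector
  exact ⟨x, hx.2, by simpa using hx.apply_eq_smul⟩

theorem pos_of_mulVec_eq_smul_mulVec {𝕜 : Type*} [RCLike 𝕜] {A B : Matrix n n 𝕜}
    (hA : A.PosDef) {x : n → 𝕜} (hx : x ≠ 0) (hB : 0 ≤ star x ⬝ᵥ (B *ᵥ x)) {μ : 𝕜}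
    (h : A *ᵥ x = μ • B *ᵥ x) : 0 < μ := by
  have hAx := hA.dotProduct_mulVec_pos hx
  have hmul : star x ⬝ᵥ (A *ᵥ x) = μ * star x ⬝ᵥ (B *ᵥ x) := by
    rw [h, dotProduct_smul, smul_eq_mul]
  have hBx : 0 < star x ⬝ᵥ (B *ᵥ x) :=
    hB.lt_of_ne' fun h0 ↦ hAx.ne' (by rw [hmul, h0, mul_zero])
  rw [← mul_div_cancel_right₀ μ hBx.ne', ← hmul]
  exact div_pos hAx hBx

theorem star_dotProduct_fromBlocks_mulVec_eq_of_mulVec_eq_smul {K : Type*} [Field K] [StarRing K]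
    {P P' : Matrix m m K} {Q : Matrix m n K} {R : Matrix n m K} {S : Matrix n n K}
    {u : m → K} {v : n → K} {μ : K} (hμ : μ ≠ 1)
    (h : fromBlocks P Q R S *ᵥ Sum.elim u v = μ • fromBlocks P' 0 R S *ᵥ Sum.elim u v) :
    star (Sum.elim u v) ⬝ᵥ (fromBlocks P' 0 R S *ᵥ Sum.elim u v) = star u ⬝ᵥ (P' *ᵥ u) := by
  have hfix : R *ᵥ u + S *ᵥ v = μ • (R *ᵥ u + S *ᵥ v) :=
    funext fun i ↦ by simpa [fromBlocks_mulVec] using congrFun h (Sum.inr i)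
  have hlow : R *ᵥ u + S *ᵥ v = 0 := by
    have : (1 - μ) • (R *ᵥ u + S *ᵥ v) = 0 := by rw [sub_smul, one_smul, ← hfix, sub_self]
    exact (smul_eq_zero.mp this).resolve_left (sub_ne_zero.mpr hμ.symm)
  simp [fromBlocks_mulVec, hlow, dotProduct, Fintype.sum_sum_type]

end Matrix

theorem blockTriangular_preconditioned_eigenvalues_positive_real_general
    (n₁ n₂ : ℕ)
    (Ahat : Matrix (Fin n₁) (Fin n₁) ℝ) (hA : Ahat.PosDef)
    (D : Matrix (Fin n₂) (Fin n₂) ℝ) (hD : D.PosDef)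
    (W : Matrix (Fin n₂) (Fin n₁) ℝ)
    (A : Matrix (Fin n₁ ⊕ Fin n₂) (Fin n₁ ⊕ Fin n₂) ℝ)
    (hAdef : A = Matrix.fromBlocks Ahat Wᵀ W D)
    (hApd : A.PosDef)
    (BT : Matrix (Fin n₁ ⊕ Fin n₂) (Fin n₁ ⊕ Fin n₂) ℝ)
    (hBT : BT = Matrix.fromBlocks Ahat 0 W D)
    (μ : ℂ) (hμ : μ ∈ spectrum ℂ ((BT⁻¹ * A).map Complex.ofReal)) :
    μ.im = 0 ∧ 0 < μ.re := by
  suffices 0 < μ from ⟨(Complex.pos_iff.mp this).2.symm, (Complex.pos_iff.mp this).1⟩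
  obtain ⟨x, hx0, hx⟩ := exists_mulVec_eq_smul_of_mem_spectrum hμ
  have hBT_unit : IsUnit BT.det := by
    rw [hBT, det_fromBlocks_zero₁₂]
    exact (mul_pos hA.det_pos hD.det_pos).ne'.isUnit
  have hgen : A.map Complex.ofReal *ᵥ x = μ • BT.map Complex.ofReal *ᵥ x := by
    have hmap : (BT * (BT⁻¹ * A)).map Complex.ofReal =
        BT.map Complex.ofReal * (BT⁻¹ * A).map Complex.ofReal :=
      Matrix.map_mul (f := Complex.ofRealHom)
    rw [← mul_nonsing_inv_cancel_left BT A hBT_unit, hmap, ← mulVec_mulVec, hx, mulVec_smul]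
  by_cases hμ1 : μ = 1
  · simp [hμ1]
  refine pos_of_mulVec_eq_smul_mulVec hApd.map_ofReal hx0 ?_ hgen
  subst hAdef hBT
  simp only [fromBlocks_map, Matrix.map_zero _ Complex.ofReal_zero] at hgen ⊢
  rw [← Sum.elim_comp_inl_inr x] at hgen ⊢
  rw [star_dotProduct_fromBlocks_mulVec_eq_of_mulVec_eq_smul hμ1 hgen]
  exact hA.map_ofReal.posSemidef.dotProduct_mulVec_nonneg _

/-- Every complex eigenvalue of `B_T⁻¹ A` is a strictly positive real number,
where `A = [[Â, Wᵀ],[W, D]]` is positive definite with `Â`, `D` symmetric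
positive definite, and `B_T = [[Â, 0],[W, D]]`. -/
theorem blockTriangular_preconditioned_eigenvalues_positive_real
    (n₁ n₂ : ℕ) (hn₁ : 0 < n₁) (hn₂ : 0 < n₂)
    (Ahat : Matrix (Fin n₁) (Fin n₁) ℝ) (hA : Ahat.PosDef)
    (D : Matrix (Fin n₂) (Fin n₂) ℝ) (hD : D.PosDef)
    (W : Matrix (Fin n₂) (Fin n₁) ℝ)
    (A : Matrix (Fin n₁ ⊕ Fin n₂) (Fin n₁ ⊕ Fin n₂) ℝ)
    (hAdef : A = Matrix.fromBlocks Ahat Wᵀ W D)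
    (hApd : A.PosDef)
    (BT : Matrix (Fin n₁ ⊕ Fin n₂) (Fin n₁ ⊕ Fin n₂) ℝ)
    (hBT : BT = Matrix.fromBlocks Ahat 0 W D)
    (μ : ℂ) (hμ : μ ∈ spectrum ℂ ((BT⁻¹ * A).map Complex.ofReal)) :
    μ.im = 0 ∧ 0 < μ.re :=
  blockTriangular_preconditioned_eigenvalues_positive_real_general n₁ n₂ Ahat hA D hD W A hAdef hApd
    BT hBT μ hμ
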